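/- arXiv:1511.02927 — 3 statements merged into one kernel-verified Lean document; each statement's English description precedes it below -/
import Mathlib

section
/- Let S be a submonoid of ℕ that generates the group ℤ (a numerical semigroup). Then the complement ℕ \ S is a finite set. -/
/-- Auxiliary: if `b ∈ S` and `b+1 ∈ S`, then every `n ≥ b*b` is in `S`. -/
lemma aux_large_mem (S : AddSubmonoid ℕ) {b : ℕ} (hb : b ∈ S) (hb1 : b + 1 ∈ S)
    {n : ℕ} (hn : b * b ≤ n) : n ∈ S := by
  rcases Nat.eq_zero_or_pos b with hb0 | hbpos
  · subst hb0
    have : n • (0 + 1 : ℕ) ∈ S := AddSubmonoid.nsmul_mem S hb1 n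
    simpa using this
  · set q := n / b with hq
    set r := n % b with hr
    have hdm : b * q + r = n := Nat.div_add_mod n b
    have hrb : r < b := Nat.mod_lt n hbpos
    have hqb : b ≤ q := Nat.le_div_iff_mul_le hbpos |>.mpr (by nlinarith)
    have hqr : r ≤ q := le_trans (le_of_lt hrb) hqb
    obtain ⟨k, hk⟩ := Nat.exists_eq_add_of_le hqr
    have heq : n = r * (b + 1) + k * b := by
      rw [← hdm, hk]; ring
    rw [heq]
    exact S.add_mem (by simpa [smul_eq_mul] using AddSubmonoid.nsmul_mem S hb1 r)
      (by simpa [smul_eq_mul] using AddSubmonoid.nsmul_mem S hb k)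

/-- If `S` is a submonoid of `ℕ` (under addition) that generates the group `ℤ`
(i.e. a numerical semigroup), then its complement `ℕ \ S` is finite. -/
theorem numericalSemigroup_complement_finite (S : AddSubmonoid ℕ)
    (hgen : AddSubgroup.closure ((fun k : ℕ => (k : ℤ)) '' (S : Set ℕ)) = ⊤) :
    {n : ℕ | n ∉ S}.Finite := by
  -- The subgroup of differences of elements of S
  let G : AddSubgroup ℤ :=
    { carrier := {x : ℤ | ∃ a ∈ S, ∃ b ∈ S, x = (a : ℤ) - (b : ℤ)}
      zero_mem' := ⟨0, S.zero_mem, 0, S.zero_mem, by simp⟩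
      add_mem' := by
        rintro x y ⟨a, ha, b, hb, rfl⟩ ⟨c, hc, d, hd, rfl⟩
        exact ⟨a + c, S.add_mem ha hc, b + d, S.add_mem hb hd, by push_cast; ring⟩
      neg_mem' := by
        rintro x ⟨a, ha, b, hb, rfl⟩
        exact ⟨b, hb, a, ha, by ring⟩ }
  have hle : AddSubgroup.closure ((fun k : ℕ => (k : ℤ)) '' (S : Set ℕ)) ≤ G := by
    rw [AddSubgroup.closure_le]
    rintro x ⟨a, ha, rfl⟩
    exact ⟨a, ha, 0, S.zero_mem, by simp⟩
  have h1 : (1 : ℤ) ∈ G := hle (hgen ▸ AddSubgroup.mem_top 1)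
  obtain ⟨a, ha, b, hb, hab⟩ := h1
  have hab' : a = b + 1 := by exact_mod_cast (by linarith [hab] : (a : ℤ) = b + 1)
  subst hab'
  apply Set.Finite.subset (Set.finite_Iio (b * b))
  intro n hn
  by_contra hlt
  exact hn (aux_large_mem S hb ha (le_of_not_gt hlt))
end

section
/- Let m be even, and let w_m be the tensor with w_m(μ_1,...,μ_m) = 1 if (μ_1,...,μ_m) is a permutation of [m] and 0 otherwise. Then P_{m,m}(w_m) equals the signed count of Latin squares Σ_{L Latin square of order m} colsgn(L), that is, the number of column-even Latin squares of order m minus the number of column-odd Latin squares of order m. -/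
/-- The invariant `P_{D,m}` of a tensor `v : [m]^D → ℂ`. -/
noncomputable def PDm (D m : ℕ) (v : (Fin D → Fin m) → ℂ) : ℂ :=
  ∑ σ : Fin D → Equiv.Perm (Fin m),
    (((∏ j, Equiv.Perm.sign (σ j) : ℤˣ) : ℤ) : ℂ) * ∏ i : Fin m, v (fun j => σ j i)

/-- Let `m` be even. Then `P_{m,m}` evaluated at the tensor which is the
indicator of permutations (`w(μ) = 1` iff `μ : [m] → [m]` is bijective) equals
the signed count `Σ_L colsgn(L)` over all Latin squares `L` of order `m`.
A Latin square is encoded by its tuple of column permutations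
`L : Fin m → Perm (Fin m)` subject to each row `j ↦ L j i` being a bijection,
and `colsgn(L) = Π_j sgn (L j)`. -/
theorem PMm_latin_square_count (m : ℕ) (hm : Even m) :
    PDm m m (fun μ => if Function.Bijective μ then 1 else 0)
      = ∑ L : Fin m → Equiv.Perm (Fin m),
          if ∀ i : Fin m, Function.Bijective (fun j : Fin m => L j i)
          then (((∏ j, Equiv.Perm.sign (L j) : ℤˣ) : ℤ) : ℂ) else 0 := by
  unfold PDm
  refine Finset.sum_congr rfl fun σ _ => ?_
  rw [Finset.prod_boole]
  by_cases h : ∀ i, Function.Bijective fun j : Fin m => σ j i <;> simp [h]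
end

section
/- Let Z be an irreducible affine curve over ℂ with a rational ℂ*-action, p ∈ Z such that the orbit map σ : ℂ* → Z, t ↦ t·p, extends to a surjective morphism σ : ℂ → Z, and suppose σ*(𝒪(Z)) = ⊕_{k∈S} ℂ·T^k ⊆ ℂ[T] for a submonoid S ⊆ ℕ. If the stabilizer {t ∈ ℂ* : t·p = p} equals the group μ_a of a-th roots of unity, then the subgroup of ℤ generated by S equals aℤ. -/
/-!
Since `σ 1 = p`, the separation hypothesis says that a unit `t` fixes `p` exactly when
`t ^ k = 1` for every `k ∈ S`. Writing `⟨S⟩ = dℤ`, this happens exactly when `t ^ d = 1`, so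
`μ_d = μ_a` as subsets of `ℂˣ`. Every natural number is the order of some unit of `ℂ` (a
primitive root of unity, or `2` for the order `0`), hence `d = a`.
-/

theorem Int.exists_nat_eq_zmultiples (H : AddSubgroup ℤ) :
    ∃ d : ℕ, H = AddSubgroup.zmultiples (d : ℤ) := by
  obtain ⟨g, rfl⟩ := Int.subgroup_cyclic H
  exact ⟨g.natAbs, by rw [Int.zmultiples_natAbs, AddSubgroup.zmultiples_eq_closure]⟩

theorem forall_pow_eq_one_iff_of_closure_eq_zmultiples {M : Type*} [Monoid M] (z : M)
    {s : Set ℕ} {d : ℕ}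
    (hd : AddSubgroup.closure ((fun k : ℕ => (k : ℤ)) '' s) = AddSubgroup.zmultiples (d : ℤ)) :
    (∀ k ∈ s, z ^ k = 1) ↔ z ^ d = 1 := by
  have hz : ∀ k : ℕ, z ^ k = 1 ↔ (k : ℤ) ∈ AddSubgroup.zmultiples (orderOf z : ℤ) := fun k => by
    rw [Int.mem_zmultiples_iff, Int.natCast_dvd_natCast, orderOf_dvd_iff_pow_eq_one]
  rw [hz, ← AddSubgroup.zmultiples_le, ← hd, AddSubgroup.closure_le, Set.image_subset_iff]
  exact forall₂_congr fun k _ => hz k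

theorem Complex.exists_unit_orderOf_eq (n : ℕ) : ∃ t : ℂˣ, orderOf (t : ℂ) = n := by
  rcases Nat.eq_zero_or_pos n with rfl | hn
  · refine ⟨Units.mk0 2 two_ne_zero, orderOf_eq_zero_iff'.mpr fun m hm h2 => ?_⟩
    have h := congrArg (‖·‖) h2
    simp only [Units.val_mk0, norm_pow, Complex.norm_two, norm_one] at h
    exact (one_lt_pow₀ one_lt_two hm.ne').ne' h
  · have hζ := Complex.isPrimitiveRoot_exp n hn.ne'
    exact ⟨Units.mk0 _ (Complex.exp_ne_zero _), hζ.eq_orderOf.symm⟩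

theorem Complex.eq_of_forall_pow_eq_one_iff {m n : ℕ}
    (h : ∀ t : ℂˣ, (t : ℂ) ^ m = 1 ↔ (t : ℂ) ^ n = 1) : m = n := by
  simp_rw [← orderOf_dvd_iff_pow_eq_one] at h
  obtain ⟨u, hu⟩ := Complex.exists_unit_orderOf_eq m
  obtain ⟨v, hv⟩ := Complex.exists_unit_orderOf_eq n
  exact Nat.dvd_antisymm (hu ▸ (h u).mp (hu ▸ dvd_rfl)) (hv ▸ (h v).mpr (hv ▸ dvd_rfl))

theorem curve_monoid_generates_general (Z : Type) [MulAction ℂˣ Z] (p : Z) (σ : ℂ → Z)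
    (S : AddSubmonoid ℕ) (a : ℕ)
    (hσ : ∀ t : ℂˣ, σ (t : ℂ) = t • p)
    (hsep : ∀ t t' : ℂ, σ t = σ t' ↔ ∀ k ∈ S, t ^ k = t' ^ k)
    (hstab : ∀ t : ℂˣ, t • p = p ↔ (t : ℂ) ^ a = 1) :
    AddSubgroup.closure ((fun k : ℕ => (k : ℤ)) '' (S : Set ℕ))
      = AddSubgroup.zmultiples (a : ℤ) := by
  have hσ1 : σ 1 = p := by simpa using hσ 1
  have hS : ∀ t : ℂˣ, (∀ k ∈ S, (t : ℂ) ^ k = 1) ↔ (t : ℂ) ^ a = 1 := fun t => by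
    rw [← hstab, ← hσ, ← hσ1, hsep]
    simp only [one_pow]
  obtain ⟨d, hd⟩ := Int.exists_nat_eq_zmultiples
    (AddSubgroup.closure ((fun k : ℕ => (k : ℤ)) '' (S : Set ℕ)))
  have hda : d = a := Complex.eq_of_forall_pow_eq_one_iff fun t =>
    (forall_pow_eq_one_iff_of_closure_eq_zmultiples (t : ℂ) hd).symm.trans (hS t)
  rw [hd, hda]

/-- Orbit-closure curve lemma. Let `Z` be (the point set of) an irreducible
affine curve with a `ℂˣ`-action, `p ∈ Z`, and let `σ : ℂ → Z` be a surjective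
regular extension of the orbit map `t ↦ t • p`. Suppose the pullback
`σ*(𝒪(Z))` of the ring of regular functions equals `⊕_{k ∈ S} ℂ·T^k` — since
`Z` is affine, its regular functions separate points, which we encode by:
`σ t = σ t' ↔ t^k = t'^k` for all `k ∈ S`. If the stabilizer of `p` is the
group `μ_a` of `a`-th roots of unity, then the subgroup of `ℤ` generated by
`S` equals `aℤ`. -/
theorem curve_monoid_generates (Z : Type) [MulAction ℂˣ Z] (p : Z) (σ : ℂ → Z)
    (S : AddSubmonoid ℕ) (a : ℕ) (ha : 0 < a)
    (hσ : ∀ t : ℂˣ, σ (t : ℂ) = t • p)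
    (hsurj : Function.Surjective σ)
    (hsep : ∀ t t' : ℂ, σ t = σ t' ↔ ∀ k ∈ S, t ^ k = t' ^ k)
    (hstab : ∀ t : ℂˣ, t • p = p ↔ (t : ℂ) ^ a = 1) :
    AddSubgroup.closure ((fun k : ℕ => (k : ℤ)) '' (S : Set ℕ))
      = AddSubgroup.zmultiples (a : ℤ) :=
  curve_monoid_generates_general Z p σ S a hσ hsep hstab
end
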